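/- If D ∪ M is a mixed dominating set of a graph G, then D ∪ V(M) is a distance-2 dominating set of the incidence graph I(G) of G (the graph obtained by subdividing every edge of G once), where edges e ∈ M are identified with their subdivision vertices. -/

import Mathlib

variable {V : Type*} [Fintype V] [DecidableEq V]

/-- The set of endpoints of an edge set `M`, i.e. `V(M)`. -/
def mVerts (M : Finset (Sym2 V)) : Finset V :=
  Finset.univ.filter fun v => ∃ e ∈ M, v ∈ e

/-- `D ∪ M` is a mixed dominating set of `G`: every vertex outside `D ∪ V(M)` has a
neighbor in `D`, and every edge outside `M` has an endpoint in `D ∪ V(M)`. -/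
def IsMDS (G : SimpleGraph V) (D : Finset V) (M : Finset (Sym2 V)) : Prop :=
  (∀ e ∈ M, e ∈ G.edgeSet) ∧
  (∀ v : V, v ∉ D → v ∉ mVerts M → ∃ u ∈ D, G.Adj u v) ∧
  (∀ e ∈ G.edgeSet, e ∉ M → ∃ v, v ∈ e ∧ (v ∈ D ∨ v ∈ mVerts M))

/-- The incidence graph (1-subdivision) of `G`: vertices are `V ⊕ Sym2 V`, with
`v` adjacent to `e` iff `e` is an edge of `G` and `v` is an endpoint of `e`.
(Elements of `Sym2 V` that are not edges of `G` are isolated junk vertices.) -/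
def incGraph {V : Type*} (G : SimpleGraph V) : SimpleGraph (V ⊕ Sym2 V) :=
  SimpleGraph.fromRel fun x y =>
    ∃ v e, x = Sum.inl v ∧ y = Sum.inr e ∧ e ∈ G.edgeSet ∧ v ∈ e

/-- `x` is within distance 2 of `s` in `H`. -/
def within2 {α : Type*} (H : SimpleGraph α) (s x : α) : Prop :=
  s = x ∨ H.Adj s x ∨ ∃ y, H.Adj s y ∧ H.Adj y x

/-!
In the incidence graph, a vertex `v` of `G` is adjacent to every edge at `v`, a neighbour `u` of
`v` is at distance two through the subdivision vertex of `uv`, and two edges sharing an endpoint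
are at distance two through that endpoint. A vertex of `G` lies in `D`, is an endpoint of an edge
of `M`, or has a neighbour in `D`; an edge of `G` lies in `M` or has an endpoint in `D` or on an
edge of `M`. Each case gives a member of `D ∪ M` within distance two.
-/

section IncidenceGraph

variable {α : Type*} {G : SimpleGraph α} {u v : α} {e f : Sym2 α}

theorem incGraph_adj_inl_inr :
    (incGraph G).Adj (Sum.inl v) (Sum.inr e) ↔ e ∈ G.edgeSet ∧ v ∈ e := by
  simp [incGraph, SimpleGraph.fromRel_adj]

theorem within2_incGraph_inr_inl (he : e ∈ G.edgeSet) (hv : v ∈ e) :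
    within2 (incGraph G) (Sum.inr e) (Sum.inl v) :=
  .inr <| .inl (incGraph_adj_inl_inr.2 ⟨he, hv⟩).symm

theorem within2_incGraph_inl_inr (he : e ∈ G.edgeSet) (hv : v ∈ e) :
    within2 (incGraph G) (Sum.inl v) (Sum.inr e) :=
  .inr <| .inl (incGraph_adj_inl_inr.2 ⟨he, hv⟩)

theorem within2_incGraph_inl_inl_of_adj (huv : G.Adj u v) :
    within2 (incGraph G) (Sum.inl u) (Sum.inl v) :=
  .inr <| .inr ⟨Sum.inr s(u, v), incGraph_adj_inl_inr.2 ⟨huv, Sym2.mem_mk_left u v⟩,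
    (incGraph_adj_inl_inr.2 ⟨huv, Sym2.mem_mk_right u v⟩).symm⟩

theorem within2_incGraph_inr_inr_of_mem (he : e ∈ G.edgeSet) (hf : f ∈ G.edgeSet)
    (hve : v ∈ e) (hvf : v ∈ f) : within2 (incGraph G) (Sum.inr f) (Sum.inr e) :=
  .inr <| .inr ⟨Sum.inl v, (incGraph_adj_inl_inr.2 ⟨hf, hvf⟩).symm,
    incGraph_adj_inl_inr.2 ⟨he, hve⟩⟩

end IncidenceGraph

theorem mem_mVerts {M : Finset (Sym2 V)} {v : V} : v ∈ mVerts M ↔ ∃ e ∈ M, v ∈ e := by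
  simp [mVerts]

namespace IsMDS

variable {G : SimpleGraph V} {D : Finset V} {M : Finset (Sym2 V)}

theorem exists_within2_inl (h : IsMDS G D M) (v : V) :
    ∃ s ∈ D.disjSum M, within2 (incGraph G) s (Sum.inl v) := by
  obtain ⟨hMG, hdom, -⟩ := h
  by_cases hvD : v ∈ D
  · exact ⟨Sum.inl v, Finset.inl_mem_disjSum.2 hvD, .inl rfl⟩
  by_cases hvM : v ∈ mVerts M
  · obtain ⟨e, heM, hve⟩ := mem_mVerts.1 hvM
    exact ⟨Sum.inr e, Finset.inr_mem_disjSum.2 heM, within2_incGraph_inr_inl (hMG e heM) hve⟩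
  obtain ⟨u, huD, huv⟩ := hdom v hvD hvM
  exact ⟨Sum.inl u, Finset.inl_mem_disjSum.2 huD, within2_incGraph_inl_inl_of_adj huv⟩

theorem exists_within2_inr (h : IsMDS G D M) {e : Sym2 V} (he : e ∈ G.edgeSet) :
    ∃ s ∈ D.disjSum M, within2 (incGraph G) s (Sum.inr e) := by
  obtain ⟨hMG, -, hcover⟩ := h
  by_cases heM : e ∈ M
  · exact ⟨Sum.inr e, Finset.inr_mem_disjSum.2 heM, .inl rfl⟩
  obtain ⟨v, hve, hvD | hvM⟩ := hcover e he heM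
  · exact ⟨Sum.inl v, Finset.inl_mem_disjSum.2 hvD, within2_incGraph_inl_inr he hve⟩
  · obtain ⟨f, hfM, hvf⟩ := mem_mVerts.1 hvM
    exact ⟨Sum.inr f, Finset.inr_mem_disjSum.2 hfM,
      within2_incGraph_inr_inr_of_mem he (hMG f hfM) hve hvf⟩

end IsMDS

/-- If `D ∪ M` is a mixed dominating set of `G`, then `D ∪ V(M)` (edges of `M`
identified with their subdivision vertices) is a distance-2 dominating set of the
incidence graph `I(G)`: every vertex of `I(G)` (i.e. every vertex of `G` and every
edge of `G`) is within distance 2 of `D ∪ M`. -/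
theorem stmt9 (G : SimpleGraph V) (D : Finset V) (M : Finset (Sym2 V))
    (h : IsMDS G D M) :
    (∀ v : V, ∃ s : V ⊕ Sym2 V,
      ((∃ d ∈ D, s = Sum.inl d) ∨ (∃ e ∈ M, s = Sum.inr e)) ∧
      within2 (incGraph G) s (Sum.inl v)) ∧
    (∀ e ∈ G.edgeSet, ∃ s : V ⊕ Sym2 V,
      ((∃ d ∈ D, s = Sum.inl d) ∨ (∃ f ∈ M, s = Sum.inr f)) ∧
      within2 (incGraph G) s (Sum.inr e)) := by
  have mem_disjSum {s : V ⊕ Sym2 V} (hs : s ∈ D.disjSum M) :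
      (∃ d ∈ D, s = Sum.inl d) ∨ (∃ e ∈ M, s = Sum.inr e) := by
    simpa only [Finset.mem_disjSum, eq_comm] using hs
  refine ⟨fun v => ?_, fun e he => ?_⟩
  · obtain ⟨s, hs, hsv⟩ := h.exists_within2_inl v
    exact ⟨s, mem_disjSum hs, hsv⟩
  · obtain ⟨s, hs, hse⟩ := h.exists_within2_inr he
    exact ⟨s, mem_disjSum hs, hse⟩
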